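/- arXiv:0908.0390 — 2 statements merged into one kernel-verified Lean document; each statement's English description precedes it below -/
import Mathlib

section
/- Let n, f be natural numbers with n > 5f, let P be a multiset of n real numbers, and let U be a submultiset of P of cardinality m with m ≥ n − f. Let B and b be real numbers, and suppose S is a submultiset of U of cardinality at least m − 2f such that every element of S is at most B − b, and suppose max U ≤ B. Then for every element p of U, the computed destination satisfies dest(P,p) ≤ B − b/2. -/
/-- `kth P k` is the `k`-th smallest element (1-based, counted with multiplicity)
of the multiset `P` of reals. -/
noncomputable def kth (P : Multiset ℝ) (k : ℕ) : ℝ :=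
  (P.sort (· ≤ ·)).getD (k - 1) 0

/-- The minimum of a (nonempty) multiset of reals: its 1st smallest element. -/
noncomputable def mmin (U : Multiset ℝ) : ℝ := kth U 1

/-- The maximum of a (nonempty) multiset of reals: its `card`-th smallest element. -/
noncomputable def mmax (U : Multiset ℝ) : ℝ := kth U (Multiset.card U)

/-- The destination computed by Algorithm 1 by a robot at position `p` observing
the configuration `P` of `n` robots (at most `f` Byzantine): the midpoint of the
trimmed range `[min(p, P_{2f+1}), max(p, P_{n-2f})]`. -/
noncomputable def dest (n f : ℕ) (P : Multiset ℝ) (p : ℝ) : ℝ :=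
  (min p (kth P (2 * f + 1)) + max p (kth P (n - 2 * f))) / 2

/-!
At least `m - 2f ≥ 2f + 1` correct robots lie at or below `B - b`, so `P_{2f+1} ≤ B - b`; all
`m ≥ n - 2f` correct robots lie at or below `B`, so `P_{n-2f} ≤ B`. The trimmed range of a correct
robot therefore has left end at most `B - b` and right end at most `B`, and its midpoint is at most
`B - b/2`.
-/

theorem List.Pairwise.getD_le_of_lt_length_filter {α : Type*} [LinearOrder α] {L : List α}
    (hL : L.Pairwise (· ≤ ·)) {c d : α} {i : ℕ} (hi : i < (L.filter (· ≤ c)).length) :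
    L.getD i d ≤ c := by
  induction L generalizing i with
  | nil => simp at hi
  | cons a L ih =>
    rw [List.pairwise_cons] at hL
    cases i with
    | zero =>
      obtain ⟨x, hx⟩ := List.exists_mem_of_length_pos hi
      obtain ⟨hx, hxc⟩ : x ∈ a :: L ∧ x ≤ c := by simpa using hx
      rcases List.mem_cons.mp hx with rfl | hx
      · simpa using hxc
      · simpa using (hL.1 x hx).trans hxc
    | succ i =>
      have : i < (L.filter (· ≤ c)).length := by
        rw [List.filter_cons] at hi
        split at hi <;> grind
      simpa using ih hL.2 this

theorem List.Pairwise.le_getD_length_sub_one {α : Type*} [LinearOrder α] {L : List α}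
    (hL : L.Pairwise (· ≤ ·)) {x d : α} (hx : x ∈ L) : x ≤ L.getD (L.length - 1) d := by
  rw [List.getD_eq_getElem _ _ (by have := List.length_pos_of_mem hx; omega),
    ← List.getLast_eq_getElem (List.ne_nil_of_mem hx)]
  exact hL.rel_getLast hx

theorem kth_le_of_le_card_filter {P : Multiset ℝ} {c : ℝ} {k : ℕ} (hk : 1 ≤ k)
    (h : k ≤ Multiset.card (P.filter (· ≤ c))) : kth P k ≤ c := by
  apply (P.pairwise_sort (· ≤ ·)).getD_le_of_lt_length_filter
  rw [← Multiset.coe_card, ← Multiset.filter_coe, Multiset.sort_eq]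
  omega

theorem le_mmax {U : Multiset ℝ} {x : ℝ} (hx : x ∈ U) : x ≤ mmax U := by
  rw [mmax, kth, ← U.length_sort (· ≤ ·)]
  exact (U.pairwise_sort _).le_getD_length_sub_one ((U.mem_sort _).mpr hx)

theorem kth_le_of_forall_mem_le {P S : Multiset ℝ} {c : ℝ} {k : ℕ} (hSP : S ≤ P)
    (hS : ∀ x ∈ S, x ≤ c) (hk : 1 ≤ k) (hkS : k ≤ Multiset.card S) : kth P k ≤ c :=
  kth_le_of_le_card_filter hk <|
    hkS.trans <| Multiset.card_le_card <| Multiset.le_filter.mpr ⟨hSP, hS⟩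

theorem stmt_10_general (n f : ℕ) (hnf : n > 5 * f) (P U : Multiset ℝ)
    (hUP : U ≤ P) (m : ℕ) (hm : Multiset.card U = m)
    (hmf : m ≥ n - f) (B b : ℝ) (S : Multiset ℝ) (hSU : S ≤ U)
    (hScard : Multiset.card S ≥ m - 2 * f) (hS : ∀ x ∈ S, x ≤ B - b)
    (hmaxU : mmax U ≤ B) :
    ∀ p ∈ U, dest n f P p ≤ B - b / 2 := by
  intro p hp
  have hUB : ∀ x ∈ U, x ≤ B := fun x hx => (le_mmax hx).trans hmaxU
  have hlow : kth P (2 * f + 1) ≤ B - b :=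
    kth_le_of_forall_mem_le (hSU.trans hUP) hS (by omega) (by omega)
  have hhigh : kth P (n - 2 * f) ≤ B := kth_le_of_forall_mem_le hUP hUB (by omega) (by omega)
  have hmin := min_le_right p (kth P (2 * f + 1))
  have hmax := max_le (hUB p hp) hhigh
  rw [dest]
  linarith

theorem stmt_10 (n f : ℕ) (hnf : n > 5 * f) (P U : Multiset ℝ)
    (hP : Multiset.card P = n) (hUP : U ≤ P) (m : ℕ) (hm : Multiset.card U = m)
    (hmf : m ≥ n - f) (B b : ℝ) (S : Multiset ℝ) (hSU : S ≤ U)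
    (hScard : Multiset.card S ≥ m - 2 * f) (hS : ∀ x ∈ S, x ≤ B - b)
    (hmaxU : mmax U ≤ B) :
    ∀ p ∈ U, dest n f P p ≤ B - b / 2 :=
  stmt_10_general n f hnf P U hUP m hm hmf B b S hSU hScard hS hmaxU
end

section
/- Let n, f be natural numbers with n > 5f, let P be a multiset of n real numbers, and let U be a submultiset of P of cardinality m with m ≥ n − f. Let b be a real number and let p be an element of U. If the computed destination satisfies dest(P,p) < min U + b, then at least m − 2f elements of U (counted with multiplicity) are strictly less than min U + 2b; equivalently, the submultiset of elements of U that are ≥ min U + 2b has cardinality at most 2f. -/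
theorem List.Pairwise.succ_le_countP_lt_of_getElem_lt {α : Type*} [Preorder α] [DecidableLT α]
    {l : List α} (hl : l.Pairwise (· ≤ ·)) {i : ℕ} (hi : i < l.length) {c : α} (h : l[i] < c) :
    i + 1 ≤ l.countP (· < c) := by
  have hprefix : ∀ x ∈ l.take (i + 1), x < c := by
    intro x hx
    obtain ⟨j, hj, rfl⟩ := List.mem_take_iff_getElem.1 hx
    have hji : (⟨j, by omega⟩ : Fin l.length) ≤ ⟨i, hi⟩ := Fin.mk_le_mk.2 (by omega)
    exact (hl.rel_get_of_le hji).trans_lt h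
  calc i + 1 = (l.take (i + 1)).length := by simp only [List.length_take]; omega
    _ = (l.take (i + 1)).countP (· < c) :=
      (List.countP_eq_length.2 fun x hx => decide_eq_true (hprefix x hx)).symm
    _ ≤ l.countP (· < c) := (List.take_sublist _ _).countP_le

theorem le_countP_lt_of_kth_lt {P : Multiset ℝ} {k : ℕ} (hk0 : 0 < k) (hk : k ≤ Multiset.card P)
    {c : ℝ} (h : kth P k < c) : k ≤ P.countP (· < c) := by
  have hi : k - 1 < (P.sort (· ≤ ·)).length := by rw [Multiset.length_sort]; omega
  rw [kth, List.getD_eq_getElem _ _ hi] at h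
  have hcount := (Multiset.pairwise_sort P (· ≤ ·)).succ_le_countP_lt_of_getElem_lt hi h
  have hcoe := Multiset.coe_countP (· < c) (P.sort (· ≤ ·))
  rw [Multiset.sort_eq] at hcoe
  omega

theorem le_kth_of_countP_lt {P : Multiset ℝ} {k : ℕ} (hk : k ≤ Multiset.card P) {c : ℝ}
    (h : P.countP (· < c) < k) : c ≤ kth P k := by
  by_contra! hc
  have := le_countP_lt_of_kth_lt (by omega) hk hc
  omega

theorem countP_not_lt_le_of_kth_lt {P : Multiset ℝ} {k : ℕ} (hk0 : 0 < k)
    (hk : k ≤ Multiset.card P) {c : ℝ} (h : kth P k < c) :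
    P.countP (fun x => ¬ x < c) ≤ Multiset.card P - k := by
  have hsplit := Multiset.card_eq_countP_add_countP (· < c) P
  have := le_countP_lt_of_kth_lt hk0 hk h
  omega

theorem mmin_le {U : Multiset ℝ} {x : ℝ} (hx : x ∈ U) : mmin U ≤ x := by
  have hsorted := Multiset.pairwise_sort U (· ≤ ·)
  rw [← Multiset.mem_sort (r := (· ≤ ·))] at hx
  rw [mmin, kth]
  revert hsorted hx
  cases U.sort (· ≤ ·) with
  | nil => simp
  | cons a t =>
    intro hx hsorted
    rcases List.mem_cons.1 hx with rfl | hxt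
    · exact le_rfl
    · exact List.rel_of_pairwise_cons hsorted hxt

theorem countP_lt_mmin_le_card_sub {P U : Multiset ℝ} (hUP : U ≤ P) :
    P.countP (· < mmin U) ≤ Multiset.card P - Multiset.card U := by
  have hU : U.countP (· < mmin U) = 0 :=
    Multiset.countP_eq_zero.2 fun x hx => not_lt.2 (mmin_le hx)
  calc P.countP (· < mmin U) = (P - U).countP (· < mmin U) + U.countP (· < mmin U) := by
        rw [← Multiset.countP_add, tsub_add_cancel_of_le hUP]
    _ ≤ Multiset.card (P - U) := by rw [hU, add_zero]; exact Multiset.countP_le_card _ _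
    _ = Multiset.card P - Multiset.card U := Multiset.card_sub hUP

theorem stmt_13 (n f : ℕ) (hnf : n > 5 * f) (P U : Multiset ℝ)
    (hP : Multiset.card P = n) (hUP : U ≤ P) (m : ℕ) (hm : Multiset.card U = m)
    (hmf : m ≥ n - f) (b : ℝ) (p : ℝ) (hp : p ∈ U)
    (hdest : dest n f P p < mmin U + b) :
    Multiset.card (U.filter (fun x => x < mmin U + 2 * b)) ≥ m - 2 * f := by
  set c := mmin U + 2 * b
  have hlow : mmin U ≤ kth P (2 * f + 1) :=
    le_kth_of_countP_lt (by omega) (by have := countP_lt_mmin_le_card_sub hUP; omega)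
  have hhigh : kth P (n - 2 * f) < c := by
    rw [dest] at hdest
    linarith [le_max_right p (kth P (n - 2 * f)), le_min (mmin_le hp) hlow]
  have hfew : U.countP (fun x => ¬ x < c) ≤ 2 * f := by
    have := countP_not_lt_le_of_kth_lt (by omega) (by omega) hhigh
    have := Multiset.countP_le_of_le (fun x => ¬ x < c) hUP
    omega
  have hsplit := Multiset.card_eq_countP_add_countP (· < c) U
  rw [ge_iff_le, ← Multiset.countP_eq_card_filter]
  omega
end
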